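/- arXiv:1808.01313 — 5 statements merged into one kernel-verified Lean document; each statement's English description precedes it below -/
import Mathlib

section
/- Every nontrivial square-complementary graph has minimum degree at least 2. -/
open SimpleGraph

/-- The square of a graph: two distinct vertices are adjacent iff they are at
distance at most 2 in `G`, i.e. adjacent or having a common neighbor. -/
def SimpleGraph.square {V : Type*} (G : SimpleGraph V) : SimpleGraph V where
  Adj u v := u ≠ v ∧ (G.Adj u v ∨ ∃ w, G.Adj u w ∧ G.Adj w v)
  symm := by
    constructor
    rintro u v ⟨h, h' | ⟨w, hw1, hw2⟩⟩
    · exact ⟨h.symm, Or.inl h'.symm⟩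
    · exact ⟨h.symm, Or.inr ⟨w, hw2.symm, hw1.symm⟩⟩
  loopless := by constructor; rintro v ⟨h, -⟩; exact h rfl

/-- A graph is square-complementary (squco) if its square is isomorphic to its
complement. -/
def SimpleGraph.IsSquco {V : Type*} (G : SimpleGraph V) : Prop :=
  Nonempty (G.square ≃g Gᶜ)

/-!
If `e : G² ≃g Gᶜ`, then `G` has no isolated vertex (an isolated vertex of `G` stays isolated in
`G²`, so `e` sends it to a vertex of `G` adjacent to all others), and hence no vertex is adjacent
to all others in `G²` (its image would be isolated in `G`). Now let `v` be a pendant vertex with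
unique neighbour `u`. Its closed neighbourhood in `G²` is the closed neighbourhood of `u` in `G`,
a clique of `G²`; transported by `e`, the non-neighbours of `a = e v` form an independent set
of `G`. But then every `z ≠ a` is at distance at most 2 from `a`: either `z` is adjacent to `a`,
or a neighbour of `z` must be. So `a` is adjacent to all other vertices in `G²`, a contradiction.
-/

namespace SimpleGraph

variable {V W : Type*} {G H : SimpleGraph V}

theorem square_adj_of_adj {u v : V} (h : G.Adj u v) : G.square.Adj u v := ⟨h.ne, .inl h⟩

theorem exists_adj_of_square_adj {u v : V} : G.square.Adj u v → ∃ w, G.Adj u w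
  | ⟨_, .inl h⟩ => ⟨v, h⟩
  | ⟨_, .inr ⟨w, h, _⟩⟩ => ⟨w, h⟩

theorem isClique_square_neighborSet_of_forall_adj_eq {u v : V} (hv : ∀ y, G.Adj v y → y = u) :
    G.square.IsClique (G.square.neighborSet v) := by
  have hnbr : ∀ y, G.square.Adj v y → y = u ∨ G.Adj u y := by
    rintro y ⟨-, hvy | ⟨w, hvw, hwy⟩⟩
    · exact .inl (hv y hvy)
    · exact .inr (hv w hvw ▸ hwy)
  intro y hy z hz hyz
  refine ⟨hyz, ?_⟩
  rcases hnbr y hy with rfl | hy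
  · rcases hnbr z hz with rfl | hz
    · exact absurd rfl hyz
    · exact .inl hz
  · rcases hnbr z hz with rfl | hz
    · exact .inl hy.symm
    · exact .inr ⟨u, hy.symm, hz⟩

theorem square_adj_of_isIndepSet_compl_neighborSet {a z t : V}
    (hind : G.IsIndepSet (Gᶜ.neighborSet a)) (hza : z ≠ a) (hzt : G.Adj z t) :
    G.square.Adj a z := by
  by_cases haz : G.Adj a z
  · exact square_adj_of_adj haz
  have hat : G.Adj a t := by
    by_contra hat
    have hta : t ≠ a := by rintro rfl; exact haz hzt.symm
    exact hind (by simp [hza.symm, haz]) (by simp [hta.symm, hat]) hzt.ne hzt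
  exact ⟨hza.symm, .inr ⟨t, hat, hzt.symm⟩⟩

theorem Iso.isClique_image {G' : SimpleGraph W} (e : G ≃g G') {s : Set V} (h : G.IsClique s) :
    G'.IsClique (e '' s) := by
  rintro _ ⟨x, hx, rfl⟩ _ ⟨y, hy, rfl⟩ hne
  exact e.map_adj_iff.2 (h hx hy (ne_of_apply_ne e hne))

theorem Iso.adj_apply_iff_of_iso_compl (e : H ≃g Gᶜ) {x y : V} :
    G.Adj (e x) (e y) ↔ x ≠ y ∧ ¬H.Adj x y := by
  rw [← e.map_adj_iff, compl_adj, e.injective.ne_iff]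
  by_cases hxy : x = y <;> simp [hxy]

namespace IsSquco

theorem exists_adj [Nontrivial V] (h : G.IsSquco) (x : V) : ∃ y, G.Adj x y := by
  obtain ⟨e⟩ := h
  by_contra! hx
  have huniv : ∀ z, z ≠ x → G.Adj (e x) (e z) := fun z hzx =>
    e.adj_apply_iff_of_iso_compl.2 ⟨hzx.symm, fun hsq => (exists_adj_of_square_adj hsq).elim hx⟩
  by_cases hfix : e x = x
  · obtain ⟨y, hyx⟩ := exists_ne x
    exact hx (e y) (hfix ▸ huniv y hyx)
  · have hne : e.symm x ≠ x := fun hc => hfix (by simpa using congrArg e hc.symm)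
    exact hx (e x) (by simpa using (huniv _ hne).symm)

theorem exists_not_square_adj [Nontrivial V] (h : G.IsSquco) (x : V) :
    ∃ z, z ≠ x ∧ ¬G.square.Adj x z := by
  have ⟨e⟩ := h
  by_contra! hx
  obtain ⟨t, ht⟩ := h.exists_adj (e x)
  rw [← e.apply_symm_apply t, e.adj_apply_iff_of_iso_compl] at ht
  exact ht.2 (hx _ ht.1.symm)

end IsSquco

end SimpleGraph

/-- Every nontrivial square-complementary graph has minimum degree at least 2. -/
theorem isSquco_two_le_degree {V : Type*} [Fintype V] [Nontrivial V] (G : SimpleGraph V)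
    [DecidableRel G.Adj] (h : G.IsSquco) (v : V) : 2 ≤ G.degree v := by
  by_contra! hdeg
  obtain ⟨u, hu⟩ := h.exists_adj v
  have hpendant : ∀ y, G.Adj v y → y = u := fun y hy =>
    Finset.card_le_one.1 (Nat.lt_succ_iff.1 hdeg) y (by simpa) u (by simpa)
  have ⟨e⟩ := h
  have hind : G.IsIndepSet (Gᶜ.neighborSet (e v)) := by
    rw [← isClique_compl, ← e.image_neighborSet]
    exact e.isClique_image (isClique_square_neighborSet_of_forall_adj_eq hpendant)
  obtain ⟨z, hza, hz⟩ := h.exists_not_square_adj (e v)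
  obtain ⟨t, hzt⟩ := h.exists_adj z
  exact hz (square_adj_of_isIndepSet_compl_neighborSet hind hza hzt)
end

section
/- If G is a nontrivial square-complementary graph, then the diameter of G is 3 or 4. -/
open SimpleGraph

/-!
If `G` had diameter at most 2, its square would be complete, hence so would `Gᶜ`, and `G` would be
edgeless, hence disconnected. If two vertices `a, b` were at distance at least 5, they would be at
distance at least 3 in `G²`, so their images would be at distance at least 3 in `Gᶜ`. But in the
complement of a graph, two vertices at distance at least 3 become a dominating edge, which forces
diameter at most 3 on `G`.
-/

namespace SimpleGraph

variable {V W : Type*} {G : SimpleGraph V} {H : SimpleGraph W}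

lemma Hom.edist_le (f : G →g H) (u v : V) : H.edist (f u) (f v) ≤ G.edist u v := by
  by_cases h : G.Reachable u v
  · obtain ⟨p, hp⟩ := h.exists_walk_length_eq_edist
    simpa [hp] using (p.map f).edist_le
  · simp [edist_eq_top_of_not_reachable h]

lemma Iso.edist_eq (φ : G ≃g H) (u v : V) : H.edist (φ u) (φ v) = G.edist u v :=
  le_antisymm (φ.toHom.edist_le u v) (by simpa using φ.symm.toHom.edist_le (φ u) (φ v))

lemma Iso.ediam_eq (φ : G ≃g H) : H.ediam = G.ediam :=
  le_antisymm (ediam_le_iff.mpr fun x y => by rw [← φ.symm.edist_eq]; exact edist_le_ediam)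
    (ediam_le_iff.mpr fun u v => by rw [← φ.edist_eq]; exact edist_le_ediam)

lemma square_adj_iff {u v : V} : G.square.Adj u v ↔ u ≠ v ∧ G.edist u v ≤ 2 := by
  rw [← not_lt, two_lt_edist_iff, Set.eq_empty_iff_forall_notMem]
  simp only [square, mem_commonNeighbors, G.adj_comm v, not_and, not_forall, not_not]
  tauto

lemma square_eq_top_of_ediam_le_two (h : G.ediam ≤ 2) : G.square = ⊤ := by
  ext u v
  simpa [square_adj_iff] using fun _ => (edist_le_ediam).trans h

lemma Walk.edist_le_two_mul_length {u v : V} (p : G.square.Walk u v) :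
    G.edist u v ≤ 2 * p.length := by
  induction p with
  | nil => simp
  | @cons u w v hadj p ih =>
    calc G.edist u v ≤ G.edist u w + G.edist w v := G.edist_triangle
      _ ≤ 2 + 2 * p.length := add_le_add (square_adj_iff.mp hadj).2 ih
      _ = 2 * (p.length + 1 : ℕ) := by push_cast; ring

lemma edist_le_two_mul_edist_square (u v : V) : G.edist u v ≤ 2 * G.square.edist u v := by
  by_cases h : G.square.Reachable u v
  · obtain ⟨p, hp⟩ := h.exists_walk_length_eq_edist
    simpa [hp] using p.edist_le_two_mul_length
  · simp [edist_eq_top_of_not_reachable h]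

lemma ediam_le_three_of_edist_le_one {x y : V} (hxy : G.edist x y ≤ 1)
    (hdom : ∀ w, G.edist w x ≤ 1 ∨ G.edist w y ≤ 1) : G.ediam ≤ 3 := by
  have hends : ∀ p q, (p = x ∨ p = y) → (q = x ∨ q = y) → G.edist p q ≤ 1 := by
    rintro p q (rfl | rfl) (rfl | rfl) <;>
      first | simp | exact hxy | exact edist_comm.le.trans hxy
  have hnear : ∀ w, ∃ p, (p = x ∨ p = y) ∧ G.edist w p ≤ 1 := fun w =>
    (hdom w).elim (fun h => ⟨x, .inl rfl, h⟩) (fun h => ⟨y, .inr rfl, h⟩)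
  refine ediam_le_iff.mpr fun u v => ?_
  obtain ⟨p, hp, hup⟩ := hnear u
  obtain ⟨q, hq, hvq⟩ := hnear v
  calc G.edist u v ≤ G.edist u p + G.edist p v := G.edist_triangle
    _ ≤ G.edist u p + (G.edist p q + G.edist q v) := by gcongr; exact G.edist_triangle
    _ ≤ 1 + (1 + 1) := add_le_add hup (add_le_add (hends p q hp hq) (edist_comm.le.trans hvq))
    _ = 3 := by norm_num

lemma ediam_compl_le_three_of_two_lt_edist {x y : V} (h : 2 < G.edist x y) : Gᶜ.ediam ≤ 3 := by
  obtain ⟨hne, hnadj, hcommon⟩ := two_lt_edist_iff.mp h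
  refine ediam_le_three_of_edist_le_one (x := x) (y := y)
    (edist_le_one_iff_adj_or_eq.mpr (.inl ⟨hne, hnadj⟩)) fun w => ?_
  simp only [edist_le_one_iff_adj_or_eq, compl_adj]
  by_contra! hw
  exact (Set.eq_empty_iff_forall_notMem.mp hcommon) w
    ⟨(hw.1.1 hw.1.2).symm, (hw.2.1 hw.2.2).symm⟩

theorem IsSquco.three_le_ediam [Nontrivial V] (h : G.IsSquco) : 3 ≤ G.ediam := by
  obtain ⟨φ⟩ := h
  by_contra hlt
  have hsq : G.square = ⊤ := square_eq_top_of_ediam_le_two (Order.le_of_lt_add_one (not_le.mp hlt))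
  have hcompl : Gᶜ = ⊤ := ediam_eq_one.mp (by rw [φ.ediam_eq, hsq, ediam_top])
  rw [compl_eq_top.mp hcompl, ediam_bot] at hlt
  exact hlt le_top

theorem IsSquco.ediam_le_four (h : G.IsSquco) : G.ediam ≤ 4 := by
  obtain ⟨φ⟩ := h
  by_contra hgt
  obtain ⟨a, b, hab⟩ : ∃ a b, 4 < G.edist a b := by simpa [ediam_le_iff] using hgt
  have hfar : 2 < Gᶜ.edist (φ a) (φ b) := by
    rw [φ.edist_eq]
    by_contra! hle
    have : G.edist a b ≤ 2 * 2 := (edist_le_two_mul_edist_square a b).trans (by gcongr)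
    exact absurd (hab.trans_le this) (by norm_num)
  have := ediam_compl_le_three_of_two_lt_edist hfar
  rw [compl_compl] at this
  exact hgt (this.trans (by norm_num))

end SimpleGraph

theorem isSquco_diam_eq_three_or_four_general {V : Type*} [Nontrivial V]
    (G : SimpleGraph V) (h : G.IsSquco) : G.diam = 3 ∨ G.diam = 4 := by
  have h3 := h.three_le_ediam
  have h4 := h.ediam_le_four
  obtain ⟨n, hn⟩ := ENat.ne_top_iff_exists.mp (h4.trans_lt (ENat.natCast_lt_top 4)).ne
  rw [diam, ← hn, ENat.toNat_natCast]
  rw [← hn] at h3 h4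
  norm_cast at h3 h4
  omega

/-- A nontrivial square-complementary graph has diameter 3 or 4. -/
theorem isSquco_diam_eq_three_or_four {V : Type*} [Fintype V] [Nontrivial V]
    (G : SimpleGraph V) (h : G.IsSquco) : G.diam = 3 ∨ G.diam = 4 :=
  isSquco_diam_eq_three_or_four_general G h
end

section
/- If G is a nontrivial regular square-complementary graph, then the diameter of G is exactly 3. -/
/-!
The vertices at distance greater than 2 from `u` are the neighbours of `u` in the complement
of `G²`. As `G² ≃ Gᶜ` and `G` is `d`-regular, `G²` is `(n - 1 - d)`-regular, so there are exactly
`d` such vertices. If `dist u v > 3`, all `d` neighbours of `v` are among them, hence they are all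
of them; but `v` is one of them and not its own neighbour. So the diameter is at most 3. It is
attained because some far pair exists: if `v ≠ u` is not far from `u`, then `u` has a neighbour,
so `d > 0` and `u` has `d` far vertices.
-/

open SimpleGraph

namespace SimpleGraph

variable {V : Type*} {G : SimpleGraph V}

lemma compl_square_adj_iff {u v : V} : G.squareᶜ.Adj u v ↔ 2 < G.edist u v := by
  rw [two_lt_edist_iff, Set.eq_empty_iff_forall_notMem]
  simp only [compl_adj, square, mem_commonNeighbors]
  grind [adj_comm]

lemma IsSquco.isRegularOfDegree_compl_square [Fintype V] [DecidableEq V] [DecidableRel G.Adj]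
    [DecidableRel G.square.Adj] (h : G.IsSquco) {d : ℕ} (hG : G.IsRegularOfDegree d) :
    G.squareᶜ.IsRegularOfDegree d := by
  obtain ⟨φ⟩ := h
  have hsq : G.square.IsRegularOfDegree (Fintype.card V - 1 - d) := fun v ↦ by
    rw [← φ.degree_eq, degree_compl, hG]
  intro v
  have hd : d ≤ Fintype.card V - 1 := by
    have := G.degree_lt_card_verts v
    rw [hG v] at this
    omega
  rw [hsq.compl v, Nat.sub_sub_self hd]

variable [Fintype V] [DecidableRel G.Adj] [DecidableRel G.squareᶜ.Adj] {d : ℕ}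

lemma edist_le_three_of_isRegularOfDegree_compl_square (hG : G.IsRegularOfDegree d)
    (hfar : G.squareᶜ.IsRegularOfDegree d) (u v : V) : G.edist u v ≤ 3 := by
  by_contra! huv
  have hsub : G.neighborFinset v ⊆ G.squareᶜ.neighborFinset u := by
    intro x hx
    rw [mem_neighborFinset] at hx
    rw [mem_neighborFinset, compl_square_adj_iff]
    by_contra! hux
    have : G.edist u v ≤ 3 := calc
      G.edist u v ≤ G.edist u x + G.edist x v := G.edist_triangle
      _ ≤ 2 + 1 := by rw [edist_eq_one_iff_adj.mpr hx.symm]; gcongr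
      _ = 3 := by norm_num
    exact this.not_gt huv
  have heq := Finset.eq_of_subset_of_card_le hsub (by rw [card_neighborFinset_eq_degree,
    card_neighborFinset_eq_degree, hG v, hfar u])
  have hv : v ∈ G.squareᶜ.neighborFinset u := by
    rw [mem_neighborFinset, compl_square_adj_iff]
    exact lt_trans (by norm_num) huv
  rw [← heq, mem_neighborFinset] at hv
  exact G.loopless.irrefl v hv

lemma exists_two_lt_edist_of_isRegularOfDegree_compl_square [Nontrivial V]
    (hG : G.IsRegularOfDegree d) (hfar : G.squareᶜ.IsRegularOfDegree d) :
    ∃ u v, 2 < G.edist u v := by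
  obtain ⟨u, v, huv⟩ := exists_pair_ne V
  by_cases hlt : 2 < G.edist u v
  · exact ⟨u, v, hlt⟩
  have hnbr : ∃ w, G.Adj u w := by
    rw [← compl_square_adj_iff, compl_adj] at hlt
    push Not at hlt
    obtain ⟨-, hadj | ⟨w, huw, -⟩⟩ := hlt huv
    exacts [⟨v, hadj⟩, ⟨w, huw⟩]
  rw [← degree_pos_iff_exists_adj, hG u, ← hfar u, degree_pos_iff_exists_adj] at hnbr
  obtain ⟨w, huw⟩ := hnbr
  exact ⟨u, w, compl_square_adj_iff.mp huw⟩

lemma ediam_eq_three_of_isRegularOfDegree_compl_square [Nontrivial V]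
    (hG : G.IsRegularOfDegree d) (hfar : G.squareᶜ.IsRegularOfDegree d) : G.ediam = 3 := by
  refine le_antisymm (ediam_le_of_edist_le
    (edist_le_three_of_isRegularOfDegree_compl_square hG hfar)) ?_
  obtain ⟨u, v, huv⟩ := exists_two_lt_edist_of_isRegularOfDegree_compl_square hG hfar
  exact (Order.add_one_le_of_lt huv).trans edist_le_ediam

end SimpleGraph

/-- A nontrivial regular square-complementary graph has diameter exactly 3. -/
theorem isSquco_regular_diam_eq_three {V : Type*} [Fintype V] [Nontrivial V]
    (G : SimpleGraph V) [DecidableRel G.Adj] (h : G.IsSquco)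
    (hreg : ∃ d, G.IsRegularOfDegree d) : G.diam = 3 := by
  classical
  obtain ⟨d, hG⟩ := hreg
  rw [diam, ediam_eq_three_of_isRegularOfDegree_compl_square hG
    (h.isRegularOfDegree_compl_square hG)]
  rfl
end

section
/- The only nontrivial square-complementary graph with maximum degree at most 2 is the 7-cycle C_7. -/
open SimpleGraph

/-!
Write `a v` for the degree of `v` in `G²`; when `Δ(G) ≤ 2`, `a v ≤ ∑_{w ∼ v} deg w ≤ 4`.
An isomorphism `G² ≃ Gᶜ` pairs every `a v` with a complement degree `n - 1 - deg u`, and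
conversely. An isolated vertex `v` has `a v = 0`, so some vertex would be adjacent in `G` to all
others, `v` included; hence all degrees are positive and `n - 3 ≤ a v ≤ n - 2`. A leaf `v` then
forces `n ≤ 5`, and walking along the path it starts leaves no room for the remaining vertices.
So `G` is `2`-regular with `a v = n - 3`: the closed second neighbourhood of a vertex misses only
two vertices, too few for a second cycle, so `G` is the cycle `C_n`, where `a v = 4` gives `n = 7`.
-/

open Finset

namespace SimpleGraph

variable {V W : Type*}

@[simp] lemma square_adj {G : SimpleGraph V} {u v : V} :
    G.square.Adj u v ↔ u ≠ v ∧ (G.Adj u v ∨ ∃ w, G.Adj u w ∧ G.Adj w v) := Iff.rfl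

lemma le_square (G : SimpleGraph V) : G ≤ G.square := fun _ _ h ↦ ⟨h.ne, Or.inl h⟩

instance [DecidableEq V] [Fintype V] (G : SimpleGraph V) [DecidableRel G.Adj] :
    DecidableRel G.square.Adj :=
  fun _ _ ↦ decidable_of_iff' _ square_adj

def Iso.square {G : SimpleGraph V} {G' : SimpleGraph W} (e : G ≃g G') :
    G.square ≃g G'.square where
  toEquiv := e.toEquiv
  map_rel_iff' := by simp [RelIso.coe_fn_toEquiv, e.surjective.exists, e.map_adj_iff]

def Iso.compl {G : SimpleGraph V} {G' : SimpleGraph W} (e : G ≃g G') : Gᶜ ≃g G'ᶜ where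
  toEquiv := e.toEquiv
  map_rel_iff' := by simp [RelIso.coe_fn_toEquiv, e.map_adj_iff]

lemma IsSquco.of_iso {G : SimpleGraph V} {G' : SimpleGraph W} (e : G ≃g G') (h : G'.IsSquco) :
    G.IsSquco :=
  let ⟨φ⟩ := h
  ⟨e.square.trans (φ.trans e.compl.symm)⟩

/-- Multiplication by `2` modulo `7` sends the distances `1, 2` (edges of the square) to the
distances `2, 4 ≡ -3` (edges of the complement); its inverse is multiplication by `4`. -/
lemma isSquco_cycleGraph_seven : (cycleGraph 7).IsSquco :=
  ⟨{ toFun := (2 * ·)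
     invFun := (4 * ·)
     left_inv := by decide
     right_inv := by decide
     map_rel_iff' := by decide }⟩

lemma cycleGraph_degree_eq_two {n : ℕ} (hn : 2 < n) (i : Fin n) :
    (cycleGraph n).degree i = 2 := by
  obtain ⟨m, rfl⟩ : ∃ m, n = m + 3 := ⟨n - 3, by omega⟩
  exact cycleGraph_degree_three_le

lemma Copy.nonempty_iso_of_card_eq [Fintype V] [Fintype W] {A : SimpleGraph V}
    {B : SimpleGraph W} [DecidableRel A.Adj] [DecidableRel B.Adj] (f : Copy A B)
    (hcard : Fintype.card V = Fintype.card W) (hdeg : ∀ v, B.degree (f v) ≤ A.degree v) :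
    Nonempty (A ≃g B) := by
  have hbij : Function.Bijective f :=
    (Fintype.bijective_iff_injective_and_card f).2 ⟨f.injective, hcard⟩
  have hnbr (v : V) : B.neighborFinset (f v) = (A.neighborFinset v).map f.toEmbedding := by
    refine (eq_of_subset_of_card_le (fun x hx ↦ ?_) (by simpa using hdeg v)).symm
    obtain ⟨c, hc, rfl⟩ := mem_map.1 hx
    exact (mem_neighborFinset _ _ _).2 (f.toHom.map_adj ((mem_neighborFinset _ _ _).1 hc))
  refine ⟨⟨Equiv.ofBijective f hbij, fun {a b} ↦ ⟨fun h ↦ ?_, f.toHom.map_adj⟩⟩⟩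
  rw [Equiv.ofBijective_apply, Equiv.ofBijective_apply, ← mem_neighborFinset, hnbr] at h
  obtain ⟨c, hc, hcb⟩ := mem_map.1 h
  rwa [← f.injective hcb, ← mem_neighborFinset]

lemma Connected.nonempty_iso_cycleGraph [Fintype V] {G : SimpleGraph V} [DecidableRel G.Adj]
    (hconn : G.Connected) (hreg : G.IsRegularOfDegree 2) :
    Nonempty (G ≃g cycleGraph (Fintype.card V)) := by
  classical
  obtain ⟨v⟩ := hconn.nonempty
  have hcyc : G.IsCycles := fun w _ ↦ by
    rw [Set.ncard_eq_toFinset_card', ← neighborFinset_def, card_neighborFinset_eq_degree,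
      hreg.degree_eq]
  have hnbr : (G.neighborSet v).Nonempty :=
    G.degree_pos_iff_nonempty.1 (by rw [hreg.degree_eq]; norm_num)
  obtain ⟨p, hp, hverts⟩ :=
    hcyc.exists_cycle_toSubgraph_verts_eq_connectedComponentSupp (c := G.connectedComponentMk v)
      rfl hnbr
  have hham : p.IsHamiltonianCycle := by
    refine ⟨hp, hp.isPath_tail.isHamiltonian_of_mem fun w ↦ ?_⟩
    have hw : w ∈ p.toSubgraph.verts := by
      rw [hverts, ConnectedComponent.mem_supp_iff, ConnectedComponent.eq]
      exact (hconn.preconnected v w).symm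
    rw [Walk.support_tail_of_not_nil _ hp.not_nil]
    rcases (Walk.mem_support_iff p).1 ((p.mem_verts_toSubgraph).1 hw) with rfl | h
    · exact Walk.end_mem_tail_support hp.not_nil
    · exact h
  have h3 : 2 < Fintype.card V := by have := hp.three_le_length; rw [hham.length_eq] at this; omega
  obtain ⟨f⟩ := (cycleGraph_isContained_iff h3).2 ⟨v, p, hp, hham.length_eq⟩
  obtain ⟨e⟩ := f.nonempty_iso_of_card_eq (by simp) fun i ↦ by
    rw [hreg.degree_eq, cycleGraph_degree_eq_two h3]
  exact ⟨e.symm⟩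

section Finite

variable [Fintype V] (G : SimpleGraph V) [DecidableRel G.Adj]

lemma neighborFinset_eq_singleton_of_degree_eq_one {v w : V} (h : G.degree v = 1)
    (hvw : G.Adj v w) : G.neighborFinset v = {w} :=
  (eq_of_subset_of_card_le (singleton_subset_iff.2 ((G.mem_neighborFinset v w).2 hvw))
    (by rw [card_neighborFinset_eq_degree, h, card_singleton])).symm

variable [DecidableEq V]

lemma degree_le_degree_square (v : V) : G.degree v ≤ G.square.degree v :=
  degree_le_of_le G.le_square

lemma degree_square_le_sum_degree (v : V) :
    G.square.degree v ≤ ∑ w ∈ G.neighborFinset v, G.degree w := by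
  have hsub : G.square.neighborFinset v ⊆
      (G.neighborFinset v).biUnion fun w ↦ insert w ((G.neighborFinset w).erase v) := by
    intro u hu
    simp only [mem_neighborFinset, square_adj] at hu
    simp only [mem_biUnion, mem_insert, mem_erase, mem_neighborFinset]
    obtain ⟨hne, h | ⟨w, hvw, hwu⟩⟩ := hu
    · exact ⟨u, h, Or.inl rfl⟩
    · exact ⟨w, hvw, Or.inr ⟨hne.symm, hwu⟩⟩
  rw [← card_neighborFinset_eq_degree]
  refine (card_le_card hsub).trans (card_biUnion_le.trans (sum_le_sum fun w hw ↦ ?_))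
  have hv : v ∈ G.neighborFinset w := by simpa [adj_comm] using hw
  have := card_pos.2 ⟨v, hv⟩
  calc #(insert w ((G.neighborFinset w).erase v))
      ≤ #((G.neighborFinset w).erase v) + 1 := card_insert_le _ _
    _ = G.degree w := by rw [card_erase_of_mem hv, card_neighborFinset_eq_degree] at *; omega

lemma card_add_degree_lt_card {S : Finset V} (hS : ∀ u ∈ S, G.neighborFinset u ⊆ S) {x : V}
    (hx : x ∉ S) : #S + G.degree x < Fintype.card V := by
  have hdisj : Disjoint (insert x S) (G.neighborFinset x) := by
    refine Finset.disjoint_left.2 fun u hu hux ↦ ?_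
    rw [mem_neighborFinset] at hux
    rcases mem_insert.1 hu with rfl | hu
    · exact G.irrefl hux
    · exact hx (hS u hu ((G.mem_neighborFinset u x).2 hux.symm))
  calc #S + G.degree x < #(insert x S) + #(G.neighborFinset x) := by
        rw [card_insert_of_notMem hx, card_neighborFinset_eq_degree]; omega
    _ = #(insert x S ∪ G.neighborFinset x) := (card_union_of_disjoint hdisj).symm
    _ ≤ Fintype.card V := card_le_univ _

lemma exists_neighborFinset_eq_pair {v w : V} (h : G.degree v = 2) (hvw : G.Adj v w) :
    ∃ u, u ≠ w ∧ G.neighborFinset v = {w, u} := by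
  have hw : w ∈ G.neighborFinset v := (G.mem_neighborFinset v w).2 hvw
  have hcard : #((G.neighborFinset v).erase w) = 1 := by
    rw [card_erase_of_mem hw, card_neighborFinset_eq_degree, h]
  obtain ⟨u, hu⟩ := card_eq_one.1 hcard
  exact ⟨u, (mem_erase.1 (hu ▸ mem_singleton_self u)).1, by rw [← hu, insert_erase hw]⟩

variable {G}

lemma degree_square_add_degree_add_one (φ : G.square ≃g Gᶜ) (v : V) :
    G.square.degree v + G.degree (φ v) + 1 = Fintype.card V := by
  have := G.degree_lt_card_verts (φ v)
  rw [← φ.degree_eq v, degree_compl]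
  omega

namespace IsSquco

lemma exists_degree_square_add_degree_add_one (hG : G.IsSquco) (u : V) :
    ∃ v, G.square.degree v + G.degree u + 1 = Fintype.card V := by
  obtain ⟨φ⟩ := hG
  have := degree_square_add_degree_add_one φ (φ.symm u)
  rw [φ.apply_symm_apply] at this
  exact ⟨φ.symm u, this⟩

lemma degree_pos [Nontrivial V] (hG : G.IsSquco) (v : V) : 0 < G.degree v := by
  obtain ⟨φ⟩ := hG
  by_contra h
  have hv : G.IsIsolated v := (G.degree_eq_zero v).1 (by omega)
  have ha : G.square.degree v = 0 := by
    have := G.degree_square_le_sum_degree v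
    rwa [(G.neighborFinset_eq_empty v).2 hv, sum_empty, Nat.le_zero] at this
  have hu : G.IsUniversal (φ v) := by
    have := degree_square_add_degree_add_one φ v
    exact (G.degree_eq_card_sub_one _).1 (by omega)
  obtain ⟨w, hw⟩ := exists_ne v
  by_cases hφ : φ v = v
  · have := hu (w := w) (by rw [hφ]; exact hw.symm)
    rw [hφ] at this
    exact hv w this
  · exact hv _ (hu hφ).symm

lemma degree_square_add_two_le [Nontrivial V] (hG : G.IsSquco) (v : V) :
    G.square.degree v + 2 ≤ Fintype.card V := by
  obtain ⟨φ⟩ := id hG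
  have := degree_square_add_degree_add_one φ v
  have := hG.degree_pos (φ v)
  omega

lemma card_le_degree_square_add_three (hG : G.IsSquco) (hdeg : ∀ u, G.degree u ≤ 2) (v : V) :
    Fintype.card V ≤ G.square.degree v + 3 := by
  obtain ⟨φ⟩ := hG
  have := degree_square_add_degree_add_one φ v
  have := hdeg (φ v)
  omega

lemma degree_square_le_one_of_closed [Nontrivial V] (hG : G.IsSquco)
    {S : Finset V} (hS : ∀ u ∈ S, G.neighborFinset u ⊆ S)
    (hcard : Fintype.card V ≤ #S + 2) {x : V} (hx : x ∉ S) : G.square.degree x ≤ 1 := by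
  have hx1 : G.degree x = 1 := by
    have := G.card_add_degree_lt_card hS hx
    have := hG.degree_pos x
    omega
  obtain ⟨y, hy⟩ := card_eq_one.1 ((card_neighborFinset_eq_degree G x).trans hx1)
  have hxy : G.Adj x y := (G.mem_neighborFinset x y).1 (hy ▸ mem_singleton_self y)
  have hyS : y ∉ S := fun hyS ↦ hx (hS y hyS ((G.mem_neighborFinset y x).2 hxy.symm))
  have := G.card_add_degree_lt_card hS hyS
  have := G.degree_square_le_sum_degree x
  rw [hy, sum_singleton] at this
  omega

/- In the next four lemmas `v` is a leaf and `v, w, u, t, s` is the path it starts; as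
`a v ≤ deg w ≤ 2`, there are at most five vertices. -/

lemma degree_eq_two_of_neighborFinset_eq_singleton [Nontrivial V] (hG : G.IsSquco)
    (hdeg : ∀ u, G.degree u ≤ 2) {v w : V} (hNv : G.neighborFinset v = {w}) :
    G.degree w = 2 := by
  have hvw : G.Adj v w := by simp [← mem_neighborFinset, hNv]
  have hdv : G.degree v = 1 := by rw [← card_neighborFinset_eq_degree, hNv, card_singleton]
  by_contra hw
  have hdw : G.degree w = 1 := by have := hG.degree_pos w; have := hdeg w; omega
  have hNw := G.neighborFinset_eq_singleton_of_degree_eq_one hdw hvw.symm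
  let S : Finset V := {v, w}
  have hS : ∀ u ∈ S, G.neighborFinset u ⊆ S := by simp [S, hNv, hNw]
  have hSc : #S = 2 := card_pair hvw.ne
  have hav : G.square.degree v ≤ 1 := by simpa [hNv, hdw] using G.degree_square_le_sum_degree v
  have haw : G.square.degree w ≤ 1 := by simpa [hNw, hdv] using G.degree_square_le_sum_degree w
  have hn4 := hG.card_le_degree_square_add_three hdeg v
  obtain ⟨z, hz⟩ := hG.exists_degree_square_add_degree_add_one v
  have haz : G.square.degree z ≤ 1 := by
    by_cases hzS : z ∈ S
    · rcases mem_insert.1 hzS with rfl | hzw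
      · exact hav
      · rwa [mem_singleton.1 hzw]
    · exact hG.degree_square_le_one_of_closed hS (by omega) hzS
  have hn3 : 2 < Fintype.card V := by
    have := hG.degree_square_add_two_le v
    have := G.degree_le_degree_square v
    omega
  obtain ⟨x, -, hx⟩ := exists_mem_notMem_of_card_lt_card (s := S) (t := univ) (by simpa [hSc])
  have := G.card_add_degree_lt_card hS hx
  have := hG.degree_pos x
  omega

lemma degree_eq_two_of_neighborFinset_eq_pair [Nontrivial V] (hG : G.IsSquco)
    (hdeg : ∀ u, G.degree u ≤ 2) {v w u : V} (hNv : G.neighborFinset v = {w})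
    (hNw : G.neighborFinset w = {v, u}) (huv : u ≠ v) : G.degree u = 2 := by
  have hvw : G.Adj v w := by simp [← mem_neighborFinset, hNv]
  have hwu : G.Adj w u := by simp [← mem_neighborFinset, hNw]
  have hdw : G.degree w = 2 := by rw [← card_neighborFinset_eq_degree, hNw, card_pair huv.symm]
  by_contra hu
  have hdu : G.degree u = 1 := by have := hG.degree_pos u; have := hdeg u; omega
  have hNu := G.neighborFinset_eq_singleton_of_degree_eq_one hdu hwu.symm
  let S : Finset V := {v, w, u}
  have hS : ∀ x ∈ S, G.neighborFinset x ⊆ S := by simp [S, hNv, hNw, hNu, insert_subset_iff]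
  have hSc : #S = 3 := card_eq_three.2 ⟨v, w, u, hvw.ne, huv.symm, hwu.ne, rfl⟩
  have hav : G.square.degree v ≤ 2 := by simpa [hNv, hdw] using G.degree_square_le_sum_degree v
  have hn5 := hG.card_le_degree_square_add_three hdeg v
  have hn4 : 3 < Fintype.card V := by
    have := hG.degree_square_add_two_le w
    have := G.degree_le_degree_square w
    omega
  obtain ⟨x, -, hx⟩ := exists_mem_notMem_of_card_lt_card (s := S) (t := univ) (by simpa [hSc])
  have := hG.degree_square_le_one_of_closed hS (by omega) hx
  have := hG.card_le_degree_square_add_three hdeg x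
  have := G.card_add_degree_lt_card hS hx
  have := hG.degree_pos x
  omega

lemma degree_eq_two_of_neighborFinset_eq_pair_of_eq_pair [Nontrivial V] (hG : G.IsSquco)
    (hdeg : ∀ u, G.degree u ≤ 2) {v w u t : V} (hNv : G.neighborFinset v = {w})
    (hNw : G.neighborFinset w = {v, u}) (hNu : G.neighborFinset u = {w, t}) (huv : u ≠ v)
    (htw : t ≠ w) (htv : t ≠ v) : G.degree t = 2 := by
  have hvw : G.Adj v w := by simp [← mem_neighborFinset, hNv]
  have hwu : G.Adj w u := by simp [← mem_neighborFinset, hNw]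
  have hut : G.Adj u t := by simp [← mem_neighborFinset, hNu]
  have hdw : G.degree w = 2 := by rw [← card_neighborFinset_eq_degree, hNw, card_pair huv.symm]
  by_contra ht
  have hdt : G.degree t = 1 := by have := hG.degree_pos t; have := hdeg t; omega
  have hNt := G.neighborFinset_eq_singleton_of_degree_eq_one hdt hut.symm
  let S : Finset V := {v, w, u, t}
  have hS : ∀ x ∈ S, G.neighborFinset x ⊆ S := by
    simp [S, hNv, hNw, hNu, hNt, insert_subset_iff]
  have hSc : #S = 4 :=
    card_eq_four.2 ⟨v, w, u, t, hvw.ne, huv.symm, htv.symm, hwu.ne, htw.symm, hut.ne, rfl⟩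
  have hav : G.square.degree v ≤ 2 := by simpa [hNv, hdw] using G.degree_square_le_sum_degree v
  have haw : 3 ≤ G.square.degree w := by
    have hsub : {v, u, t} ⊆ G.square.neighborFinset w := by
      simp only [insert_subset_iff, singleton_subset_iff, mem_neighborFinset, square_adj]
      exact ⟨⟨hvw.ne.symm, Or.inl hvw.symm⟩, ⟨hwu.ne, Or.inl hwu⟩,
        ⟨htw.symm, Or.inr ⟨u, hwu, hut⟩⟩⟩
    rw [← card_neighborFinset_eq_degree,
      ← card_eq_three.2 ⟨v, u, t, huv.symm, htv.symm, hut.ne, rfl⟩]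
    exact card_le_card hsub
  have := hG.card_le_degree_square_add_three hdeg v
  have := hG.degree_square_add_two_le w
  obtain ⟨x, -, hx⟩ :=
    exists_mem_notMem_of_card_lt_card (s := S) (t := univ) (by simp [hSc]; omega)
  have := G.card_add_degree_lt_card hS hx
  have := hG.degree_pos x
  omega

lemma false_of_neighborFinset_eq_pair [Nontrivial V] (hG : G.IsSquco)
    (hdeg : ∀ u, G.degree u ≤ 2) {v w u t s : V} (hNv : G.neighborFinset v = {w})
    (hNw : G.neighborFinset w = {v, u}) (hNu : G.neighborFinset u = {w, t})
    (hNt : G.neighborFinset t = {u, s}) (huv : u ≠ v) (htw : t ≠ w) (htv : t ≠ v)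
    (hsu : s ≠ u) : False := by
  have hvw : G.Adj v w := by simp [← mem_neighborFinset, hNv]
  have hwu : G.Adj w u := by simp [← mem_neighborFinset, hNw]
  have hut : G.Adj u t := by simp [← mem_neighborFinset, hNu]
  have hts : G.Adj t s := by simp [← mem_neighborFinset, hNt]
  have hdw : G.degree w = 2 := by rw [← card_neighborFinset_eq_degree, hNw, card_pair huv.symm]
  have hsw : s ≠ w := by
    rintro rfl
    have : t ∈ G.neighborFinset s := (G.mem_neighborFinset s t).2 hts.symm
    simp only [hNw, mem_insert, mem_singleton] at this
    exact this.elim htv hut.ne'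
  have hsv : s ≠ v := by
    rintro rfl
    have : t ∈ G.neighborFinset s := (G.mem_neighborFinset s t).2 hts.symm
    simp only [hNv, mem_singleton] at this
    exact htw this
  have hau : 4 ≤ G.square.degree u := by
    have hsub : {w, t, v, s} ⊆ G.square.neighborFinset u := by
      simp only [insert_subset_iff, singleton_subset_iff, mem_neighborFinset, square_adj]
      exact ⟨⟨hwu.ne', Or.inl hwu.symm⟩, ⟨hut.ne, Or.inl hut⟩,
        ⟨huv, Or.inr ⟨w, hwu.symm, hvw.symm⟩⟩, ⟨hsu.symm, Or.inr ⟨t, hut, hts⟩⟩⟩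
    rw [← card_neighborFinset_eq_degree, ← card_eq_four.2
      ⟨w, t, v, s, htw.symm, hvw.ne', hsw.symm, htv, hts.ne, hsv.symm, rfl⟩]
    exact card_le_card hsub
  have hav : G.square.degree v ≤ 2 := by simpa [hNv, hdw] using G.degree_square_le_sum_degree v
  have := hG.card_le_degree_square_add_three hdeg v
  have := hG.degree_square_add_two_le u
  omega

lemma degree_ne_one [Nontrivial V] (hG : G.IsSquco) (hdeg : ∀ u, G.degree u ≤ 2) (v : V) :
    G.degree v ≠ 1 := by
  intro hv
  obtain ⟨w, hNv⟩ := card_eq_one.1 ((card_neighborFinset_eq_degree G v).trans hv)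
  have hvw : G.Adj v w := by simp [← mem_neighborFinset, hNv]
  obtain ⟨u, huv, hNw⟩ := G.exists_neighborFinset_eq_pair
    (hG.degree_eq_two_of_neighborFinset_eq_singleton hdeg hNv) hvw.symm
  have hwu : G.Adj w u := by simp [← mem_neighborFinset, hNw]
  obtain ⟨t, htw, hNu⟩ := G.exists_neighborFinset_eq_pair
    (hG.degree_eq_two_of_neighborFinset_eq_pair hdeg hNv hNw huv) hwu.symm
  have hut : G.Adj u t := by simp [← mem_neighborFinset, hNu]
  have htv : t ≠ v := by
    rintro rfl
    have : u ∈ G.neighborFinset t := (G.mem_neighborFinset t u).2 hut.symm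
    rw [hNv, mem_singleton] at this
    exact hwu.ne this.symm
  obtain ⟨s, hsu, hNt⟩ := G.exists_neighborFinset_eq_pair
    (hG.degree_eq_two_of_neighborFinset_eq_pair_of_eq_pair hdeg hNv hNw hNu huv htw htv) hut.symm
  exact hG.false_of_neighborFinset_eq_pair hdeg hNv hNw hNu hNt huv htw htv hsu

lemma isRegularOfDegree_two [Nontrivial V] (hG : G.IsSquco) (hdeg : ∀ u, G.degree u ≤ 2) :
    G.IsRegularOfDegree 2 := fun v ↦ by
  have := hG.degree_pos v
  have := hG.degree_ne_one hdeg v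
  have := hdeg v
  omega

lemma degree_square_add_three (hG : G.IsSquco) (hreg : G.IsRegularOfDegree 2) (v : V) :
    G.square.degree v + 3 = Fintype.card V := by
  obtain ⟨φ⟩ := hG
  have := degree_square_add_degree_add_one φ v
  rwa [hreg.degree_eq] at this

lemma connected [Nonempty V] (hG : G.IsSquco) (hreg : G.IsRegularOfDegree 2) : G.Connected := by
  obtain ⟨v⟩ := ‹Nonempty V›
  refine (connected_iff_exists_forall_reachable G).2 ⟨v, fun y ↦ ?_⟩
  by_contra hy
  let S := univ.filter (G.Reachable v)
  have hS : ∀ u ∈ S, G.neighborFinset u ⊆ S := fun u hu w hw ↦ by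
    simp only [S, mem_filter, mem_univ, true_and, mem_neighborFinset] at hu hw ⊢
    exact hu.trans hw.reachable
  have hball : insert v (G.square.neighborFinset v) ⊆ S := by
    intro u hu
    simp only [S, mem_filter, mem_univ, true_and, mem_insert, mem_neighborFinset,
      square_adj] at hu ⊢
    rcases hu with rfl | ⟨-, h | ⟨w, hvw, hwu⟩⟩
    · rfl
    · exact h.reachable
    · exact hvw.reachable.trans hwu.reachable
  have h1 := card_le_card hball
  rw [card_insert_of_notMem (G.square.notMem_neighborFinset_self v),
    card_neighborFinset_eq_degree] at h1
  have h2 := G.card_add_degree_lt_card hS (by simpa [S] using hy)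
  have := hG.degree_square_add_three hreg v
  rw [hreg.degree_eq] at h2
  omega

lemma card_eq_seven [Nonempty V] (hG : G.IsSquco) (hreg : G.IsRegularOfDegree 2) :
    Fintype.card V = 7 := by
  obtain ⟨v⟩ := ‹Nonempty V›
  have ha := hG.degree_square_add_three hreg v
  have h5 : 5 ≤ Fintype.card V := by
    have := G.degree_le_degree_square v
    rw [hreg.degree_eq] at this
    omega
  have h7 : Fintype.card V ≤ 7 := by
    have := G.degree_square_le_sum_degree v
    rw [sum_congr rfl fun w _ ↦ hreg.degree_eq w, sum_const, card_neighborFinset_eq_degree,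
      hreg.degree_eq, smul_eq_mul] at this
    omega
  obtain ⟨e⟩ := (hG.connected hreg).nonempty_iso_cycleGraph hreg
  have hC := e.square.degree_eq v
  have key : ∀ n, 5 ≤ n → n ≤ 7 →
      ∀ i : Fin n, (cycleGraph n).square.degree i + 3 = n → n = 7 := by
    intro n hn5 hn7
    interval_cases n <;> decide
  exact key _ h5 h7 _ (hC ▸ ha)

end IsSquco

end Finite

end SimpleGraph

/-- The only nontrivial square-complementary graph with maximum degree at most 2
is the 7-cycle. -/
theorem isSquco_maxDegree_le_two_iff {V : Type*} [Fintype V] [Nontrivial V]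
    (G : SimpleGraph V) [DecidableRel G.Adj] (hdeg : G.maxDegree ≤ 2) :
    G.IsSquco ↔ Nonempty (G ≃g cycleGraph 7) := by
  classical
  refine ⟨fun hG ↦ ?_, fun ⟨e⟩ ↦ isSquco_cycleGraph_seven.of_iso e⟩
  have hreg := hG.isRegularOfDegree_two fun v ↦ (G.degree_le_maxDegree v).trans hdeg
  obtain ⟨e⟩ := (hG.connected hreg).nonempty_iso_cycleGraph hreg
  rw [hG.card_eq_seven hreg] at e
  exact ⟨e⟩
end

section
/- Let G and G' be vertex-disjoint bipartite graphs with bipartitions {A,B} and {A',B'}, all four parts nonempty, with G' the bipartite complement of an isomorphic copy of G, and assume neither G nor G' has isolated vertices. Let H be the graph on V(G) ∪ V(G') ∪ {c_1,c_2,d_1,d_2} with edges E(G) ∪ E(G') ∪ {c_1d_1, c_2d_2} ∪ {ad : a∈A, d∈{d_1,d_2}} ∪ {a'b : a'∈A', b∈B} ∪ {b'c : b'∈B', c∈{c_1,c_2}}. Then H is a bipartite square-complementary graph. -/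
/-!
`H` is bipartite with sides `X = A ∪ A' ∪ {c₁, c₂}` and `Y = B ∪ B' ∪ {d₁, d₂}`, and, because `G`
and `G'` have no isolated vertices and all parts are nonempty, any two vertices on the same side
have a common neighbour. Hence `H²` consists of all pairs inside `X` or inside `Y` together with the
edges of `H`, while `Hᶜ` consists of the same pairs together with the non-edges between `X` and
`Y`. The permutation that moves `G` onto `G'` along `e` and back, swaps `c₁` with `c₂` and fixes
`d₁, d₂` preserves both sides and exchanges edges and non-edges between them, so it is an
isomorphism `H² ≃g Hᶜ`.
-/

open SimpleGraph

/-- `{A, B}` is a bipartition of `G`: the two sets partition the vertex set and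
every edge of `G` joins a vertex of `A` to a vertex of `B`. -/
def SimpleGraph.IsBipartitionOf {V : Type*} (G : SimpleGraph V) (A B : Set V) : Prop :=
  (∀ v, v ∈ A ↔ v ∉ B) ∧ ∀ ⦃u v⦄, G.Adj u v → (u ∈ A ∧ v ∈ B) ∨ (u ∈ B ∧ v ∈ A)

/-- The bipartite complement of `G` with respect to the bipartition `{A, B}`:
its edges are exactly the non-edges of `G` joining `A` and `B`. -/
def SimpleGraph.bipCompl {V : Type*} (G : SimpleGraph V) (A B : Set V) : SimpleGraph V where
  Adj u v := u ≠ v ∧ ((u ∈ A ∧ v ∈ B) ∨ (u ∈ B ∧ v ∈ A)) ∧ ¬ G.Adj u v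
  symm := by
    constructor
    rintro u v ⟨hne, hAB | hBA, hn⟩
    · exact ⟨hne.symm, Or.inr ⟨hAB.2, hAB.1⟩, fun h => hn h.symm⟩
    · exact ⟨hne.symm, Or.inl ⟨hBA.2, hBA.1⟩, fun h => hn h.symm⟩
  loopless := by constructor; rintro v ⟨h, -⟩; exact h rfl

/-- Auxiliary (asymmetric) edge relation for the construction `H(G, G')`:
on top of the edges of `G` and `G'` we add the two edges `c₁d₁`, `c₂d₂`, all
edges between `A` and `D = {d₁, d₂}`, all edges between `A'` and `B`, and all
edges between `B'` and `C = {c₁, c₂}`.  In the vertex type, `Sum.inr (Sum.inl i)`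
is `c_{i+1}` and `Sum.inr (Sum.inr j)` is `d_{j+1}`. -/
def hRel {V V' : Type*} (G : SimpleGraph V) (G' : SimpleGraph V')
    (A : Set V) (B : Set V) (A' : Set V') (B' : Set V') :
    (V ⊕ V') ⊕ (Fin 2 ⊕ Fin 2) → (V ⊕ V') ⊕ (Fin 2 ⊕ Fin 2) → Prop
  | .inl (.inl u), .inl (.inl v) => G.Adj u v
  | .inl (.inr u), .inl (.inr v) => G'.Adj u v
  | .inr (.inl i), .inr (.inr j) => i = j
  | .inl (.inl a), .inr (.inr _) => a ∈ A
  | .inl (.inr a'), .inl (.inl b) => a' ∈ A' ∧ b ∈ B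
  | .inl (.inr b'), .inr (.inl _) => b' ∈ B'
  | _, _ => False

/-- The construction `H(G, G')` as a simple graph. -/
def Hgraph {V V' : Type*} (G : SimpleGraph V) (G' : SimpleGraph V')
    (A : Set V) (B : Set V) (A' : Set V') (B' : Set V') :
    SimpleGraph ((V ⊕ V') ⊕ (Fin 2 ⊕ Fin 2)) where
  Adj x y := x ≠ y ∧ (hRel G G' A B A' B' x y ∨ hRel G G' A B A' B' y x)
  symm := by constructor; rintro x y ⟨h, h'⟩; exact ⟨h.symm, h'.symm⟩
  loopless := by constructor; rintro x ⟨h, -⟩; exact h rfl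

namespace SimpleGraph

variable {W : Type*} {H : SimpleGraph W} {X Y : Set W}

theorem IsBipartitionOf.symm (h : H.IsBipartitionOf X Y) : H.IsBipartitionOf Y X :=
  ⟨fun v => by rw [h.1 v, not_not], fun _ _ huv => (h.2 huv).symm⟩

theorem IsBipartitionOf.mem_right_iff (h : H.IsBipartitionOf X Y) {v : W} : v ∈ Y ↔ v ∉ X :=
  h.symm.1 v

theorem IsBipartitionOf.mem_iff_notMem_of_adj (h : H.IsBipartitionOf X Y) {u v : W}
    (huv : H.Adj u v) : u ∈ X ↔ v ∉ X := by
  have := h.1 u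
  have := h.1 v
  rcases h.2 huv with ⟨hu, hv⟩ | ⟨hu, hv⟩ <;> tauto

theorem isBipartitionOf_compl_of_adj (h : ∀ ⦃u v⦄, H.Adj u v → (u ∈ X ↔ v ∉ X)) :
    H.IsBipartitionOf X Xᶜ :=
  ⟨fun _ => not_not.symm, fun u v huv => by
    have := h huv
    simp only [Set.mem_compl_iff]
    tauto⟩

theorem IsBipartitionOf.exists_adj_mem_right (h : H.IsBipartitionOf X Y)
    (hiso : ∀ v, ∃ u, H.Adj v u) {u : W} (hu : u ∈ X) : ∃ v ∈ Y, H.Adj u v := by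
  obtain ⟨v, huv⟩ := hiso u
  exact ⟨v, h.mem_right_iff.mpr ((h.mem_iff_notMem_of_adj huv).mp hu), huv⟩

theorem IsBipartitionOf.not_adj_of_mem_iff (h : H.IsBipartitionOf X Y) {u v : W}
    (huv : u ∈ X ↔ v ∈ X) : ¬ H.Adj u v := fun hadj => by
  have := h.mem_iff_notMem_of_adj hadj
  tauto

theorem IsBipartitionOf.square_adj_iff_adj (h : H.IsBipartitionOf X Y) {u v : W}
    (huv : ¬ (u ∈ X ↔ v ∈ X)) : H.square.Adj u v ↔ H.Adj u v := by
  refine ⟨?_, fun hadj => ⟨hadj.ne, .inl hadj⟩⟩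
  rintro ⟨-, hadj | ⟨w, huw, hwv⟩⟩
  · exact hadj
  · have := h.mem_iff_notMem_of_adj huw
    have := h.mem_iff_notMem_of_adj hwv
    tauto

theorem IsBipartitionOf.bipCompl_adj_iff {V : Type*} {G : SimpleGraph V} {A B : Set V}
    (h : G.IsBipartitionOf A B) {u v : V} (hu : u ∈ A) (hv : v ∉ A) :
    (G.bipCompl A B).Adj u v ↔ ¬ G.Adj u v := by
  simp [bipCompl, ne_of_mem_of_not_mem hu hv, hu, h.mem_right_iff.mpr hv]

theorem IsBipartitionOf.isSquco (hX : H.IsBipartitionOf X Xᶜ)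
    (hcommon : ∀ ⦃x y⦄, x ≠ y → (x ∈ X ↔ y ∈ X) → ∃ w, H.Adj x w ∧ H.Adj w y)
    (φ : W ≃ W) (hφX : ∀ x, φ x ∈ X ↔ x ∈ X)
    (hφ : ∀ x ∈ X, ∀ y ∉ X, H.Adj x y ↔ ¬ H.Adj (φ x) (φ y)) : H.IsSquco := by
  refine ⟨⟨φ, fun {x y} => ?_⟩⟩
  rw [compl_adj, φ.injective.ne_iff]
  by_cases hxy : x ∈ X ↔ y ∈ X
  · have hφxy : φ x ∈ X ↔ φ y ∈ X := by rw [hφX, hφX, hxy]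
    simp only [hX.not_adj_of_mem_iff hφxy, not_false_eq_true, and_true]
    exact ⟨fun hne => ⟨hne, .inr (hcommon hne hxy)⟩, And.left⟩
  · rw [hX.square_adj_iff_adj hxy]
    have hne : x ≠ y := fun h => hxy (h ▸ Iff.rfl)
    simp only [hne, ne_eq, not_false_eq_true, true_and]
    by_cases hx : x ∈ X
    · exact (hφ x hx y (by tauto)).symm
    · rw [H.adj_comm, H.adj_comm x]
      exact (hφ y (by tauto) x hx).symm

end SimpleGraph

namespace Hgraph

variable {V V' : Type*} {G : SimpleGraph V} {G' : SimpleGraph V'} {A B : Set V} {A' B' : Set V'}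

def side (A : Set V) (A' : Set V') : Set ((V ⊕ V') ⊕ (Fin 2 ⊕ Fin 2)) :=
  {x | match x with
    | .inl (.inl v) => v ∈ A
    | .inl (.inr v) => v ∈ A'
    | .inr (.inl _) => True
    | .inr (.inr _) => False}

theorem isBipartitionOf_side (hbip : G.IsBipartitionOf A B) (hbip' : G'.IsBipartitionOf A' B') :
    (Hgraph G G' A B A' B').IsBipartitionOf (side A A') (side A A')ᶜ := by
  refine SimpleGraph.isBipartitionOf_compl_of_adj ?_
  suffices h : ∀ x y, hRel G G' A B A' B' x y → (x ∈ side A A' ↔ y ∉ side A A') by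
    rintro x y ⟨-, hxy | hyx⟩
    · exact h x y hxy
    · have := h y x hyx
      tauto
  rintro ((u | u) | (i | i)) ((v | v) | (j | j)) h <;> simp only [hRel, side, Set.mem_ofPred_eq, not_true_eq_false, not_false_eq_true, iff_true,
      iff_false] at h ⊢
  · exact hbip.mem_iff_notMem_of_adj h
  · exact h
  · exact iff_of_true h.1 (hbip.mem_right_iff.mp h.2)
  · exact hbip'.mem_iff_notMem_of_adj h
  · exact hbip'.mem_right_iff.mp h

theorem exists_adj_adj_of_mem_side (hbip : G.IsBipartitionOf A B)
    (hbip' : G'.IsBipartitionOf A' B') (hB : B.Nonempty) (hB' : B'.Nonempty)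
    (hiso : ∀ v, ∃ u, G.Adj v u) (hiso' : ∀ v, ∃ u, G'.Adj v u)
    {x y : (V ⊕ V') ⊕ (Fin 2 ⊕ Fin 2)} (hx : x ∈ side A A') (hy : y ∈ side A A') :
    ∃ w, (Hgraph G G' A B A' B').Adj x w ∧ (Hgraph G G' A B A' B').Adj w y := by
  rcases x with (u | u) | (i | i) <;> rcases y with (v | v) | (j | j) <;>
    simp only [side, Set.mem_ofPred_eq] at hx hy
  · exact ⟨.inr (.inr 0), by simp [Hgraph, hRel, hx, hy]⟩
  · obtain ⟨b, hb, hub⟩ := hbip.exists_adj_mem_right hiso hx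
    exact ⟨.inl (.inl b), by simp [Hgraph, hRel, hub, hub.ne, hb, hy]⟩
  · exact ⟨.inr (.inr j), by simp [Hgraph, hRel, hx]⟩
  · obtain ⟨b, hb, hvb⟩ := hbip.exists_adj_mem_right hiso hy
    exact ⟨.inl (.inl b), by simp [Hgraph, hRel, hvb.symm, hvb.ne', hb, hx]⟩
  · obtain ⟨b, hb⟩ := hB
    exact ⟨.inl (.inl b), by simp [Hgraph, hRel, hb, hx, hy]⟩
  · obtain ⟨b', hb', hub'⟩ := hbip'.exists_adj_mem_right hiso' hx
    exact ⟨.inl (.inr b'), by simp [Hgraph, hRel, hub', hub'.ne, hb']⟩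
  · exact ⟨.inr (.inr i), by simp [Hgraph, hRel, hy]⟩
  · obtain ⟨b', hb', hvb'⟩ := hbip'.exists_adj_mem_right hiso' hy
    exact ⟨.inl (.inr b'), by simp [Hgraph, hRel, hvb'.symm, hvb'.ne', hb']⟩
  · obtain ⟨b', hb'⟩ := hB'
    exact ⟨.inl (.inr b'), by simp [Hgraph, hRel, hb']⟩

theorem exists_adj_adj_of_notMem_side (hbip : G.IsBipartitionOf A B)
    (hbip' : G'.IsBipartitionOf A' B') (hA : A.Nonempty) (hA' : A'.Nonempty)
    (hiso : ∀ v, ∃ u, G.Adj v u) (hiso' : ∀ v, ∃ u, G'.Adj v u)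
    {x y : (V ⊕ V') ⊕ (Fin 2 ⊕ Fin 2)} (hx : x ∉ side A A') (hy : y ∉ side A A') :
    ∃ w, (Hgraph G G' A B A' B').Adj x w ∧ (Hgraph G G' A B A' B').Adj w y := by
  rcases x with (u | u) | (i | i) <;> rcases y with (v | v) | (j | j) <;>
    simp only [side, Set.mem_ofPred_eq, ← hbip.mem_right_iff, ← hbip'.mem_right_iff,
      not_true_eq_false, not_false_eq_true] at hx hy
  · obtain ⟨a', ha'⟩ := hA'
    exact ⟨.inl (.inr a'), by simp [Hgraph, hRel, ha', hx, hy]⟩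
  · obtain ⟨a', ha', hva'⟩ := hbip'.symm.exists_adj_mem_right hiso' hy
    exact ⟨.inl (.inr a'), by simp [Hgraph, hRel, hva'.symm, hva'.ne', ha', hx]⟩
  · obtain ⟨a, ha, hua⟩ := hbip.symm.exists_adj_mem_right hiso hx
    exact ⟨.inl (.inl a), by simp [Hgraph, hRel, hua, hua.ne, ha]⟩
  · obtain ⟨a', ha', hua'⟩ := hbip'.symm.exists_adj_mem_right hiso' hx
    exact ⟨.inl (.inr a'), by simp [Hgraph, hRel, hua', hua'.ne, ha', hy]⟩
  · exact ⟨.inr (.inl 0), by simp [Hgraph, hRel, hx, hy]⟩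
  · exact ⟨.inr (.inl j), by simp [Hgraph, hRel, hx]⟩
  · obtain ⟨a, ha, hva⟩ := hbip.symm.exists_adj_mem_right hiso hy
    exact ⟨.inl (.inl a), by simp [Hgraph, hRel, hva.symm, hva.ne', ha]⟩
  · exact ⟨.inr (.inl i), by simp [Hgraph, hRel, hy]⟩
  · obtain ⟨a, ha⟩ := hA
    exact ⟨.inl (.inl a), by simp [Hgraph, hRel, ha]⟩

def swap (e : V ≃ V') : Equiv.Perm ((V ⊕ V') ⊕ (Fin 2 ⊕ Fin 2)) :=
  Equiv.sumCongr ((Equiv.sumCongr e e.symm).trans (Equiv.sumComm V' V))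
    (Equiv.sumCongr Fin.revPerm (Equiv.refl _))

@[simp] theorem swap_inl_inl (e : V ≃ V') (v : V) : swap e (.inl (.inl v)) = .inl (.inr (e v)) :=
  rfl

@[simp] theorem swap_inl_inr (e : V ≃ V') (v : V') :
    swap e (.inl (.inr v)) = .inl (.inl (e.symm v)) :=
  rfl

@[simp] theorem swap_inr_inl (e : V ≃ V') (i : Fin 2) : swap e (.inr (.inl i)) = .inr (.inl i.rev) :=
  rfl

@[simp] theorem swap_inr_inr (e : V ≃ V') (j : Fin 2) : swap e (.inr (.inr j)) = .inr (.inr j) :=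
  rfl

theorem swap_mem_side_iff {e : V ≃ V'} (he : ∀ v, v ∈ A ↔ e v ∈ A')
    (x : (V ⊕ V') ⊕ (Fin 2 ⊕ Fin 2)) : swap e x ∈ side A A' ↔ x ∈ side A A' := by
  rcases x with (u | u) | (i | i) <;> simp [side, he]

theorem adj_inl_inl_iff {u v : V} :
    (Hgraph G G' A B A' B').Adj (.inl (.inl u)) (.inl (.inl v)) ↔ G.Adj u v :=
  ⟨fun h => h.2.elim id fun h => h.symm, fun h => ⟨by simpa using h.ne, .inl h⟩⟩

theorem adj_inl_inr_iff {u v : V'} :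
    (Hgraph G G' A B A' B').Adj (.inl (.inr u)) (.inl (.inr v)) ↔ G'.Adj u v :=
  ⟨fun h => h.2.elim id fun h => h.symm, fun h => ⟨by simpa using h.ne, .inl h⟩⟩

theorem adj_iff_not_adj_swap (hbip : G.IsBipartitionOf A B)
    (hbip' : G'.IsBipartitionOf A' B') {e : V ≃ V'}
    (he : ∀ v, v ∈ A ↔ e v ∈ A')
    (hcompl : ∀ u v, G'.Adj (e u) (e v) ↔ (G.bipCompl A B).Adj u v)
    {x y : (V ⊕ V') ⊕ (Fin 2 ⊕ Fin 2)} (hx : x ∈ side A A') (hy : y ∉ side A A') :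
    (Hgraph G G' A B A' B').Adj x y ↔
      ¬ (Hgraph G G' A B A' B').Adj (swap e x) (swap e y) := by
  have he' : ∀ v, v ∈ A' ↔ e.symm v ∈ A := fun v => by rw [he, e.apply_symm_apply]
  rcases x with (u | u) | (i | i) <;> rcases y with (v | v) | (j | j) <;>
    simp only [side, Set.mem_ofPred_eq, he', not_true_eq_false, not_false_eq_true] at hx hy <;>
    simp only [swap_inl_inl, swap_inl_inr, swap_inr_inl, swap_inr_inr]
  case inl.inl.inl.inl =>
    rw [adj_inl_inl_iff, adj_inl_inr_iff, hcompl, hbip.bipCompl_adj_iff hx hy, not_not]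
  case inl.inr.inl.inr =>
    have hcompl_symm := hcompl (e.symm u) (e.symm v)
    simp only [Equiv.apply_symm_apply] at hcompl_symm
    rw [adj_inl_inr_iff, adj_inl_inl_iff, hcompl_symm, hbip.bipCompl_adj_iff hx hy]
  case inr.inl.inr.inr =>
    simp only [Hgraph, ne_eq, hRel, Sum.inr.injEq, reduceCtorEq, not_false_eq_true, or_false,
      true_and]
    revert i j
    decide
  all_goals simp [Hgraph, hRel, he', hbip.mem_right_iff, hbip'.mem_right_iff, hx, hy]

end Hgraph

theorem Hgraph_isSquco_general {V V' : Type*}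
    (G : SimpleGraph V) (G' : SimpleGraph V')
    (A B : Set V) (A' B' : Set V')
    (hbip : G.IsBipartitionOf A B) (hbip' : G'.IsBipartitionOf A' B')
    (hA : A.Nonempty) (hB : B.Nonempty) (hA' : A'.Nonempty) (hB' : B'.Nonempty)
    (hiso : ∀ v : V, ∃ u, G.Adj v u) (hiso' : ∀ v : V', ∃ u, G'.Adj v u)
    (hcompl : ∃ e : V ≃ V', (∀ v, v ∈ A ↔ e v ∈ A') ∧
      ∀ u v, G'.Adj (e u) (e v) ↔ (G.bipCompl A B).Adj u v) :
    (∃ X Y, (Hgraph G G' A B A' B').IsBipartitionOf X Y) ∧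
      (Hgraph G G' A B A' B').IsSquco := by
  obtain ⟨e, he, hcompl⟩ := hcompl
  have hside := Hgraph.isBipartitionOf_side (B := B) (B' := B') hbip hbip'
  refine ⟨⟨_, _, hside⟩, hside.isSquco ?_ (Hgraph.swap e) (Hgraph.swap_mem_side_iff he)
    fun x hx y hy => Hgraph.adj_iff_not_adj_swap hbip hbip' he hcompl hx hy⟩
  intro x y _ hxy
  by_cases hx : x ∈ Hgraph.side A A'
  · exact Hgraph.exists_adj_adj_of_mem_side hbip hbip' hB hB' hiso hiso' hx (hxy.mp hx)
  · exact Hgraph.exists_adj_adj_of_notMem_side hbip hbip' hA hA' hiso hiso' hx (mt hxy.mpr hx)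

/-- If `G` and `G'` are bipartite graphs with bipartitions `{A, B}` and
`{A', B'}`, all four parts nonempty, without isolated vertices, and `G'` is the
bipartite complement of an isomorphic copy of `G`, then `H(G, G')` is a
bipartite square-complementary graph. -/
theorem Hgraph_isSquco {V V' : Type*} [Fintype V] [Fintype V']
    (G : SimpleGraph V) (G' : SimpleGraph V')
    (A B : Set V) (A' B' : Set V')
    (hbip : G.IsBipartitionOf A B) (hbip' : G'.IsBipartitionOf A' B')
    (hA : A.Nonempty) (hB : B.Nonempty) (hA' : A'.Nonempty) (hB' : B'.Nonempty)
    (hiso : ∀ v : V, ∃ u, G.Adj v u) (hiso' : ∀ v : V', ∃ u, G'.Adj v u)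
    (hcompl : ∃ e : V ≃ V', (∀ v, v ∈ A ↔ e v ∈ A') ∧
      ∀ u v, G'.Adj (e u) (e v) ↔ (G.bipCompl A B).Adj u v) :
    (∃ X Y, (Hgraph G G' A B A' B').IsBipartitionOf X Y) ∧
      (Hgraph G G' A B A' B').IsSquco :=
  Hgraph_isSquco_general G G' A B A' B' hbip hbip' hA hB hA' hB' hiso hiso' hcompl
end
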